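/- arXiv:1406.6717 — 5 statements merged into one kernel-verified Lean document; each statement's English description precedes it below -/
import Mathlib

section
/- (Core of Claim 3 of Example 4.3.) Let q : (ℕ → ℝ) → C(ℝ, ℝ) be a linear map which is continuous from the product topology on ℕ → ℝ to the compact-open topology on C(ℝ, ℝ). Then there exists N ∈ ℕ such that for every sequence x : ℕ → ℝ with x n = 0 for all n ≤ N, the function q x vanishes on [-1, 1], i.e. (q x)(t) = 0 for every t with |t| ≤ 1. In particular, q is not injective on any complement of a finite-codimensional coordinate subspace, and x ↦ (n ↦ (q x)⁽ⁿ⁾(0)) is not injective. -/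
open Topology Filter

/-- Core of Claim 3 of Example 4.3: a continuous linear map
`q : (∏_ω ℝ) → C(ℝ, ℝ)` kills, on `[-1, 1]`, all sequences vanishing in the
first `N` coordinates for some `N`; consequently `x ↦ (n ↦ (q x)⁽ⁿ⁾(0))` is
not injective. -/
theorem no_continuous_section_core (q : (ℕ → ℝ) →ₗ[ℝ] C(ℝ, ℝ))
    (hq : Continuous q) :
    (∃ N : ℕ, ∀ x : ℕ → ℝ, (∀ n ≤ N, x n = 0) →
      ∀ t : ℝ, |t| ≤ 1 → q x t = 0) ∧
    ¬ Function.Injective (fun x : ℕ → ℝ => fun n : ℕ => iteratedDeriv n (q x) 0) := by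
  have key : ∃ N : ℕ, ∀ x : ℕ → ℝ, (∀ n ≤ N, x n = 0) →
      ∀ t : ℝ, |t| ≤ 1 → q x t = 0 := by
    -- the basic open set
    have hV : IsOpen {f : C(ℝ, ℝ) | Set.MapsTo f (Set.Icc (-1 : ℝ) 1) (Metric.ball 0 1)} :=
      ContinuousMap.isOpen_setOf_mapsTo isCompact_Icc Metric.isOpen_ball
    have h0 : (0 : C(ℝ, ℝ)) ∈ {f : C(ℝ, ℝ) | Set.MapsTo f (Set.Icc (-1 : ℝ) 1) (Metric.ball 0 1)} := by
      intro t _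
      simp
    have hnhds : {f : C(ℝ, ℝ) | Set.MapsTo f (Set.Icc (-1 : ℝ) 1) (Metric.ball 0 1)} ∈ 𝓝 (0 : C(ℝ, ℝ)) :=
      hV.mem_nhds h0
    have hpre : q ⁻¹' {f : C(ℝ, ℝ) | Set.MapsTo f (Set.Icc (-1 : ℝ) 1) (Metric.ball 0 1)} ∈ 𝓝 (0 : ℕ → ℝ) := by
      have := hq.continuousAt (x := (0 : ℕ → ℝ))
      have hq0 : q 0 = 0 := map_zero q
      exact this (by rw [hq0]; exact hnhds)
    rw [nhds_pi, Filter.mem_pi] at hpre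
    obtain ⟨I, hIfin, s, hs, hsub⟩ := hpre
    obtain ⟨N, hN⟩ := hIfin.bddAbove
    refine ⟨N, fun x hx t ht => ?_⟩
    have hmem : ∀ c : ℝ, c • x ∈ I.pi s := by
      intro c i hi
      have : x i = 0 := hx i (hN hi)
      simp [this]
      exact mem_of_mem_nhds (hs i)
    have hball : ∀ c : ℝ, q (c • x) t ∈ Metric.ball (0 : ℝ) 1 := by
      intro c
      exact hsub (hmem c) (Set.mem_Icc.2 (abs_le.1 ht))
    by_contra hne
    have h2 : ∀ c : ℝ, |c * q x t| < 1 := by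
      intro c
      have := hball c
      rw [map_smul] at this
      simpa [Real.dist_eq, abs_mul] using this
    have := h2 (2 / q x t)
    rw [div_mul_cancel₀ _ hne] at this
    norm_num at this
  refine ⟨key, ?_⟩
  obtain ⟨N, hN⟩ := key
  intro hinj
  set x : ℕ → ℝ := Pi.single (N + 1) 1 with hxdef
  have hx0 : ∀ n ≤ N, x n = 0 := by
    intro n hn
    exact Pi.single_eq_of_ne (by omega) 1
  have hzero : ∀ t : ℝ, |t| ≤ 1 → q x t = 0 := hN x hx0
  have hev : (q x : ℝ → ℝ) =ᶠ[𝓝 (0 : ℝ)] (fun _ => 0) := by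
    filter_upwards [Metric.ball_mem_nhds (0 : ℝ) one_pos] with t ht
    exact hzero t (le_of_lt (by simpa [Real.dist_eq] using ht))
  have hd : (fun n : ℕ => iteratedDeriv n (q x) 0) = fun n : ℕ => iteratedDeriv n (q 0) 0 := by
    funext n
    rw [map_zero]
    rw [hev.iteratedDeriv_eq n]
    congr 1
  have := hinj hd
  have : x (N + 1) = (0 : ℕ → ℝ) (N + 1) := by rw [this]
  simp [hxdef] at this
end

section
/- (Claim 3 of Example 4.3: the short exact sequence 0 → K → C^∞(ℝ,ℝ) → ∏_ω ℝ → 0 does not split; topological form.) There is no linear map q : (ℕ → ℝ) → (ℝ → ℝ) such that: (i) each q x is a C^∞ function ℝ → ℝ; (ii) q is continuous as a map from the product topology on ℕ → ℝ to the compact-open topology on C(ℝ, ℝ); and (iii) (q x)⁽ⁿ⁾(0) = x n for every x : ℕ → ℝ and every n ∈ ℕ (i.e. q is a section of the jet map φ(f)(n) = f⁽ⁿ⁾(0)). -/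
open Set Filter Topology

/-- Claim 3 of Example 4.3: there is no linear map `q : (ℕ → ℝ) → (ℝ → ℝ)` that
takes values in `C^∞` functions, is continuous into `C(ℝ, ℝ)` with the
compact-open topology, and is a section of the jet map `f ↦ (n ↦ f⁽ⁿ⁾(0))`. -/
theorem no_smooth_linear_section :
    ¬ ∃ q : (ℕ → ℝ) →ₗ[ℝ] (ℝ → ℝ),
      ∃ hq : ∀ x : ℕ → ℝ, ContDiff ℝ (⊤ : ℕ∞) (q x),
        Continuous (fun x : ℕ → ℝ => (⟨q x, (hq x).continuous⟩ : C(ℝ, ℝ))) ∧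
        ∀ (x : ℕ → ℝ) (n : ℕ), iteratedDeriv n (q x) 0 = x n := by
  rintro ⟨q, hq, hcont, hsec⟩
  set F : (ℕ → ℝ) → C(ℝ, ℝ) := fun x => ⟨q x, (hq x).continuous⟩ with hF
  have hopen : IsOpen {f : C(ℝ, ℝ) | MapsTo f (Icc (-1 : ℝ) 1) (Metric.ball (0 : ℝ) 1)} :=
    ContinuousMap.isOpen_setOf_mapsTo isCompact_Icc Metric.isOpen_ball
  have h0 : F 0 ∈ {f : C(ℝ, ℝ) | MapsTo f (Icc (-1 : ℝ) 1) (Metric.ball (0 : ℝ) 1)} := by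
    intro t _
    have : q 0 t = 0 := by rw [map_zero q]; rfl
    simp [hF, this]
  have hmem : F ⁻¹' {f : C(ℝ, ℝ) | MapsTo f (Icc (-1 : ℝ) 1) (Metric.ball (0 : ℝ) 1)} ∈
      𝓝 (0 : ℕ → ℝ) := hcont.continuousAt.preimage_mem_nhds (hopen.mem_nhds h0)
  rw [nhds_pi, Filter.mem_pi] at hmem
  obtain ⟨I, hIfin, V, hV, hsub⟩ := hmem
  obtain ⟨N, hN⟩ := hIfin.infinite_compl.nonempty
  -- g is q of the N-th basis vector
  set g : ℝ → ℝ := q (Pi.single N 1) with hg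
  have hzero : ∀ t ∈ Icc (-1 : ℝ) 1, g t = 0 := by
    intro t ht
    by_contra hne
    have hc : ∀ c : ℝ, |c * g t| < 1 := by
      intro c
      have hx : (c • (Pi.single N 1 : ℕ → ℝ)) ∈ I.pi V := by
        intro i hi
        have hiN : i ≠ N := fun h => hN (h ▸ hi)
        have : (c • (Pi.single N 1 : ℕ → ℝ)) i = 0 := by
          simp [Pi.single_eq_of_ne hiN]
        rw [this]
        exact mem_of_mem_nhds (hV i)
      have := hsub hx ht
      have hqs : q (c • (Pi.single N 1 : ℕ → ℝ)) = c • g := by rw [map_smul]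
      simpa [hF, hqs, Real.dist_eq, abs_mul] using this
    have := hc (2 / g t)
    rw [div_mul_cancel₀ 2 hne] at this
    norm_num at this
  have hev : g =ᶠ[𝓝 (0 : ℝ)] (fun _ => (0 : ℝ)) := by
    filter_upwards [Icc_mem_nhds (by norm_num : (-1 : ℝ) < 0) (by norm_num : (0 : ℝ) < 1)]
      with t ht using hzero t ht
  have h1 : iteratedDeriv N g 0 = 0 := by
    rw [hev.iteratedDeriv_eq N, iteratedDeriv_eq_iterate,
      Function.iterate_fixed (by funext x; simp : deriv (fun _ : ℝ => (0:ℝ)) = fun _ => 0)]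
  have h2 : iteratedDeriv N g 0 = 1 := by
    rw [hg, hsec (Pi.single N 1) N, Pi.single_eq_same]
  rw [h1] at h2
  exact zero_ne_one h2
end

section
/- (Analysis content of Example 5.7: C^∞(ℝ,ℝ) is not fine.) For every n ∈ ℕ and every open neighborhood U of 0 in ℝ, there do not exist C^∞ functions g_1, …, g_n, h_1, …, h_n : ℝ → ℝ such that exp(x·y) = ∑_{k=1}^{n} g_k(x)·h_k(y) for all x ∈ U and all y ∈ ℝ. (Proof idea: for suitable δ > 0 with δ, 2δ, …, nδ ∈ U, the (n+1)×(n+1) matrix [e^{ijδ²}]_{i,j=0}^{n} would be a sum of n rank-one matrices and hence singular, contradicting the nonvanishing of its Vandermonde determinant.) -/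
/-- Analysis content of Example 5.7: `exp (x * y)` cannot be written as a finite
sum `∑ g k x * h k y` of products of smooth functions, for `x` in any
neighborhood `U` of `0` and all `y`. -/
theorem exp_mul_not_finite_sum_of_products (n : ℕ) (U : Set ℝ)
    (hU : IsOpen U) (h0 : (0 : ℝ) ∈ U) :
    ¬ ∃ g h : Fin n → ℝ → ℝ,
      (∀ k, ContDiff ℝ (⊤ : ℕ∞) (g k)) ∧ (∀ k, ContDiff ℝ (⊤ : ℕ∞) (h k)) ∧
      ∀ x ∈ U, ∀ y : ℝ, Real.exp (x * y) = ∑ k : Fin n, g k x * h k y := by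
  rintro ⟨g, h, -, -, hsum⟩
  obtain ⟨ε, hε, hball⟩ := Metric.isOpen_iff.mp hU 0 h0
  set δ : ℝ := ε / (n + 1) with hδdef
  have hδpos : 0 < δ := by positivity
  have hx : ∀ i : Fin (n + 1), (i : ℝ) * δ ∈ U := by
    intro i
    apply hball
    have hi : (i : ℝ) ≤ n := by exact_mod_cast Nat.lt_succ_iff.mp i.isLt
    have h1 : (i : ℝ) * δ ≤ n * δ := by
      apply mul_le_mul_of_nonneg_right hi hδpos.le
    have h2 : (n : ℝ) * δ < ε := by
      rw [hδdef]
      rw [mul_div_assoc']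
      rw [div_lt_iff₀ (by positivity)]
      nlinarith [mul_pos hδpos hδpos]
    have h0' : 0 ≤ (i : ℝ) * δ := by positivity
    simp only [Metric.mem_ball, Real.dist_eq, sub_zero, abs_of_nonneg h0']
    linarith
  -- the Vandermonde matrix
  set t : Fin (n + 1) → ℝ := fun i => Real.exp ((i : ℝ) * δ * δ) with ht
  set G : Matrix (Fin (n + 1)) (Fin n) ℝ := fun i k => g k ((i : ℝ) * δ) with hG
  set H : Matrix (Fin n) (Fin (n + 1)) ℝ := fun k j => h k ((j : ℝ) * δ) with hH
  have hM : Matrix.vandermonde t = G * H := by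
    ext i j
    rw [Matrix.vandermonde, Matrix.mul_apply]
    simp only [Matrix.of_apply, hG, hH, ht]
    rw [← Real.exp_nat_mul]
    rw [← hsum _ (hx i) ((j : ℝ) * δ)]
    ring_nf
  have hdet : (Matrix.vandermonde t).det ≠ 0 := by
    rw [Matrix.det_vandermonde]
    apply Finset.prod_ne_zero_iff.mpr
    intro i _
    apply Finset.prod_ne_zero_iff.mpr
    intro j hj
    have hij : (i : ℝ) < (j : ℝ) := by exact_mod_cast (Finset.mem_Ioi.mp hj)
    have : t i < t j := by
      apply Real.exp_lt_exp.mpr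
      nlinarith [mul_pos hδpos hδpos]
    exact sub_ne_zero.mpr (ne_of_gt this)
  have hunit : IsUnit (Matrix.vandermonde t) := by
    rw [Matrix.isUnit_iff_isUnit_det]
    exact isUnit_iff_ne_zero.mpr hdet
  have hrank1 : (Matrix.vandermonde t).rank = n + 1 := by
    rw [Matrix.rank_of_isUnit _ hunit, Fintype.card_fin]
  have hrank2 : (Matrix.vandermonde t).rank ≤ n := by
    rw [hM]
    exact le_trans (Matrix.rank_mul_le_left G H) (Matrix.rank_le_card_width G |>.trans (by simp))
  omega
end

section
/- (Key lemma in the proof of Proposition 5.8 that every fine diffeological vector space is Frölicher.) Let V be a vector space over ℝ (with no topology), let U be an open subset of ℝ^m, and let f : U → V be a function such that for every linear functional ℓ : V → ℝ the composite ℓ ∘ f : U → ℝ is C^∞ on U. Then every point u ∈ U has an open neighborhood U' ⊆ U such that the image f(U') is contained in a finite-dimensional linear subspace of V, i.e. the ℝ-span of f(U') is finite-dimensional. -/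
/-- Key lemma in Proposition 5.8: if `f : U → V` (V an abstract real vector
space) is scalarwise smooth, then locally its image spans a finite-dimensional
subspace. -/
theorem scalarwise_smooth_locally_finiteDimensional
    {V : Type*} [AddCommGroup V] [Module ℝ V] {m : ℕ}
    {U : Set (Fin m → ℝ)} (hU : IsOpen U) (f : (Fin m → ℝ) → V)
    (hf : ∀ ℓ : V →ₗ[ℝ] ℝ, ContDiffOn ℝ (⊤ : ℕ∞) (fun x => ℓ (f x)) U) :
    ∀ u ∈ U, ∃ U' : Set (Fin m → ℝ), IsOpen U' ∧ u ∈ U' ∧ U' ⊆ U ∧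
      FiniteDimensional ℝ (Submodule.span ℝ (f '' U')) := by
  classical
  intro u hu
  obtain ⟨r, hr, hball⟩ := Metric.nhds_basis_closedBall.mem_iff.mp (hU.mem_nhds hu)
  refine ⟨Metric.ball u r, Metric.isOpen_ball, Metric.mem_ball_self hr,
    (Metric.ball_subset_closedBall).trans hball, ?_⟩
  by_contra hfd
  set s : Set V := f '' Metric.ball u r with hs
  obtain ⟨t, hts, hspan, hli⟩ := exists_linearIndependent ℝ s
  have htinf : t.Infinite := by
    intro hfin
    exact hfd (hspan ▸ FiniteDimensional.span_of_finite ℝ hfin)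
  haveI : Infinite t := htinf.to_subtype
  let e := Infinite.natEmbedding t
  let v : ℕ → V := fun n => (e n : V)
  have hv_inj : Function.Injective v :=
    Subtype.val_injective.comp e.injective
  have hv_mem : ∀ n, v n ∈ t := fun n => (e n).2
  -- extend `t` to a basis and build the functional
  have hli : LinearIndepOn ℝ id t := hli
  have hext := hli.subset_extend (Set.subset_univ t)
  let b := Module.Basis.extend hli
  let g : hli.extend (Set.subset_univ t) → ℝ := fun x =>
    if h : ∃ n, v n = (x : V) then (h.choose : ℝ) else 0
  let ℓ : V →ₗ[ℝ] ℝ := b.constr ℝ g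
  have hℓv : ∀ n, ℓ (v n) = n := by
    intro n
    have hmem : v n ∈ hli.extend (Set.subset_univ t) := hext (hv_mem n)
    have hb : b ⟨v n, hmem⟩ = v n := Module.Basis.extend_apply_self hli ⟨v n, hmem⟩
    have := b.constr_basis ℝ g ⟨v n, hmem⟩
    rw [hb] at this
    rw [show (ℓ (v n) = b.constr ℝ g (v n)) from rfl, this]
    have h : ∃ k, v k = v n := ⟨n, rfl⟩
    simp only [g, dif_pos h]
    exact_mod_cast hv_inj h.choose_spec
  -- continuity gives a bound on the compact closed ball
  have hcont : ContinuousOn (fun x => ℓ (f x)) (Metric.closedBall u r) :=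
    ((hf ℓ).continuousOn).mono hball
  obtain ⟨C, hC⟩ :=
    (isCompact_closedBall u r).exists_bound_of_continuousOn hcont
  obtain ⟨n, hn⟩ := exists_nat_gt C
  obtain ⟨x, hx, hfx⟩ := hts (hv_mem n)
  have hxcb : x ∈ Metric.closedBall u r := Metric.ball_subset_closedBall hx
  have : ‖ℓ (f x)‖ ≤ C := hC x hxcb
  rw [hfx, hℓv n] at this
  have : (n : ℝ) ≤ C := le_trans (le_abs_self _) this
  linarith
end

section
/- (Example 5.5: ∏_ω ℝ is not fine.) Let λ : ℝ → ℝ be a C^∞ function whose support is contained in the open interval (0, 1) and whose range is [0, 1], and define Φ : ℝ → (ℕ → ℝ) by Φ(t)(n) = λ(n(n+1)(t − 1/(n+1))). Then: (a) for each n ∈ ℕ the coordinate function t ↦ Φ(t)(n) is C^∞; and (b) for every ε > 0, the ℝ-span of the image Φ((−ε, ε)) = { Φ(t) : |t| < ε } in the space ℕ → ℝ is not finite-dimensional. -/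
/-- Example 5.5: with `λ` a smooth bump function supported in `(0,1)` with range
`[0,1]`, the curve `Φ(t)(n) = λ(n(n+1)(t − 1/(n+1)))` into `∏_ω ℝ` has smooth
coordinates, yet on every neighborhood of `0` its image spans an
infinite-dimensional subspace. Hence `∏_ω ℝ` is not fine. -/
theorem pi_omega_not_fine (lam : ℝ → ℝ) (hlam : ContDiff ℝ (⊤ : ℕ∞) lam)
    (hsupp : Function.support lam ⊆ Set.Ioo 0 1)
    (hrange : Set.range lam = Set.Icc 0 1)
    (Φ : ℝ → ℕ → ℝ)
    (hΦ : ∀ (t : ℝ) (n : ℕ),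
      Φ t n = lam ((n * (n + 1) : ℝ) * (t - 1 / ((n : ℝ) + 1)))) :
    (∀ n : ℕ, ContDiff ℝ (⊤ : ℕ∞) (fun t : ℝ => Φ t n)) ∧
    ∀ ε : ℝ, 0 < ε →
      ¬ FiniteDimensional ℝ (Submodule.span ℝ (Φ '' Set.Ioo (-ε) ε)) := by
  constructor
  · intro n
    simp only [hΦ]
    exact hlam.comp (contDiff_const.mul (contDiff_id.sub contDiff_const))
  · intro ε hε hfin
    obtain ⟨s0, hs0⟩ : ∃ s0, lam s0 = 1 := by
      have : (1:ℝ) ∈ Set.range lam := by rw [hrange]; exact ⟨by norm_num, le_refl 1⟩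
      exact this
    obtain ⟨hs0l, hs0r⟩ : s0 ∈ Set.Ioo (0:ℝ) 1 :=
      hsupp (by simp [Function.mem_support, hs0])
    set T : ℕ → ℝ := fun n => s0 / ((n:ℝ) * ((n:ℝ)+1)) + 1/((n:ℝ)+1) with hT
    have hTpos : ∀ n : ℕ, 1 ≤ n → 0 < T n := by
      intro n hn
      have hnr : (1:ℝ) ≤ (n:ℝ) := by exact_mod_cast hn
      have : (0:ℝ) < (n:ℝ) * ((n:ℝ)+1) := by nlinarith
      exact add_pos (div_pos hs0l this) (by positivity)
    have hTlt : ∀ n : ℕ, 1 ≤ n → T n < 1/(n:ℝ) := by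
      intro n hn
      have hnr : (1:ℝ) ≤ (n:ℝ) := by exact_mod_cast hn
      have hA : (0:ℝ) < (n:ℝ) * ((n:ℝ)+1) := by nlinarith
      have h1 : s0 / ((n:ℝ) * ((n:ℝ)+1)) < 1 / ((n:ℝ) * ((n:ℝ)+1)) := by gcongr
      have h2 : 1 / ((n:ℝ) * ((n:ℝ)+1)) + 1/((n:ℝ)+1) = 1/(n:ℝ) := by
        field_simp
        ring
      rw [hT]
      linarith
    have hTgt : ∀ n : ℕ, 1 ≤ n → 1/((n:ℝ)+1) < T n := by
      intro n hn
      have hnr : (1:ℝ) ≤ (n:ℝ) := by exact_mod_cast hn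
      have hA : (0:ℝ) < (n:ℝ) * ((n:ℝ)+1) := by nlinarith
      have : 0 < s0 / ((n:ℝ) * ((n:ℝ)+1)) := div_pos hs0l hA
      rw [hT]; linarith
    have main : ∀ n : ℕ, 1 ≤ n → Φ (T n) = Pi.single n (1:ℝ) := by
      intro n hn
      have hnr : (1:ℝ) ≤ (n:ℝ) := by exact_mod_cast hn
      funext m
      rw [hΦ]
      by_cases hm : m = n
      · subst hm
        rw [Pi.single_eq_same]
        have harg : ((m:ℝ) * ((m:ℝ) + 1)) * (T m - 1 / ((m:ℝ) + 1)) = s0 := by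
          rw [hT]
          have h1 : (m:ℝ) ≠ 0 := by positivity
          have h2 : (m:ℝ) + 1 ≠ 0 := by positivity
          field_simp
          ring
        rw [show ((m:ℝ) * ((m:ℝ) + 1) : ℝ) * (T m - 1 / ((m:ℝ) + 1)) =
          ((m:ℝ) * ((m:ℝ) + 1)) * (T m - 1 / ((m:ℝ) + 1)) from rfl, harg, hs0]
      · rw [Pi.single_eq_of_ne hm]
        by_contra h
        obtain ⟨h1, h2⟩ : ((m:ℝ) * ((m:ℝ)+1) : ℝ) * (T n - 1 / ((m:ℝ) + 1)) ∈ Set.Ioo (0:ℝ) 1 :=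
          hsupp (Function.mem_support.mpr h)
        rcases Nat.eq_zero_or_pos m with hm0 | hm1
        · subst hm0
          norm_num at h1
        · have hmr : (1:ℝ) ≤ (m:ℝ) := by exact_mod_cast hm1
          have hB : (0:ℝ) < (m:ℝ) * ((m:ℝ)+1) := by nlinarith
          rcases lt_or_gt_of_ne hm with hlt | hgt
          · -- m < n : T n > 1/(m+1) from h1, but T n < 1/n ≤ 1/(m+1)
            have hx : 0 < T n - 1 / ((m:ℝ) + 1) := by
              rcases mul_pos_iff.mp h1 with ⟨_, hx⟩ | ⟨hc, _⟩
              · exact hx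
              · linarith
            have hmn : (m:ℝ) + 1 ≤ (n:ℝ) := by exact_mod_cast hlt
            have : 1/(n:ℝ) ≤ 1/((m:ℝ)+1) :=
              one_div_le_one_div_of_le (by linarith) hmn
            have := hTlt n hn
            linarith
          · -- m > n : T n < 1/m from h2, but T n > 1/(n+1) ≥ 1/m
            have hnm : (n:ℝ) + 1 ≤ (m:ℝ) := by exact_mod_cast hgt
            have hx : T n - 1 / ((m:ℝ) + 1) < 1 / ((m:ℝ) * ((m:ℝ)+1)) := by
              rw [lt_div_iff₀ hB]
              linarith [h2]
            have hsum : 1 / ((m:ℝ) * ((m:ℝ)+1)) + 1/((m:ℝ)+1) = 1/(m:ℝ) := by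
              field_simp; ring
            have h1m : 1/(m:ℝ) ≤ 1/((n:ℝ)+1) :=
              one_div_le_one_div_of_le (by linarith) hnm
            have := hTgt n hn
            linarith
    obtain ⟨N, hN⟩ := exists_nat_one_div_lt hε
    set f : ℕ → ℕ := fun k => k + N + 1 with hf
    have hf1 : ∀ k, 1 ≤ f k := fun k => by simp only [hf]; omega
    have hTmem : ∀ k, T (f k) ∈ Set.Ioo (-ε) ε := by
      intro k
      constructor
      · linarith [hTpos (f k) (hf1 k)]
      · have h1 := hTlt (f k) (hf1 k)
        have h2 : ((N:ℝ) + 1) ≤ ((f k : ℕ):ℝ) := by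
          simp only [hf]; push_cast; linarith [Nat.cast_nonneg (α := ℝ) k]
        have h3 : 1/((f k : ℕ):ℝ) ≤ 1/((N:ℝ)+1) :=
          one_div_le_one_div_of_le (by positivity) h2
        calc T (f k) < 1/((f k : ℕ):ℝ) := h1
          _ ≤ 1/((N:ℝ)+1) := h3
          _ < ε := hN
    have hmemS : ∀ k, (Pi.single (f k) (1:ℝ) : ℕ → ℝ) ∈
        Submodule.span ℝ (Φ '' Set.Ioo (-ε) ε) := by
      intro k
      rw [← main (f k) (hf1 k)]
      exact Submodule.subset_span ⟨T (f k), hTmem k, rfl⟩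
    -- linear independence of the singles
    have hsing : LinearIndependent ℝ (fun n : ℕ => (Pi.single n (1:ℝ) : ℕ → ℝ)) := by
      have hb := (Finsupp.basisSingleOne (R := ℝ) (ι := ℕ)).linearIndependent
      have hmap := hb.map' (Finsupp.lcoeFun (R := ℝ)) (by
        rw [LinearMap.ker_eq_bot]
        exact fun x y hxy => DFunLike.coe_injective hxy)
      convert hmap using 2 with n
      simp [Finsupp.lcoeFun, Finsupp.single_eq_pi_single]
      all_goals rfl
    have hfinj : Function.Injective f := by intro a b hab; simp [hf] at hab; omega
    have hli : LinearIndependent ℝ (fun k : ℕ => (Pi.single (f k) (1:ℝ) : ℕ → ℝ)) :=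
      hsing.comp f hfinj
    set S := Submodule.span ℝ (Φ '' Set.Ioo (-ε) ε)
    have hli' : LinearIndependent ℝ (fun k : ℕ =>
        (⟨Pi.single (f k) (1:ℝ), hmemS k⟩ : S)) := by
      apply LinearIndependent.of_comp S.subtype
      exact hli
    exact Module.Finite.not_linearIndependent_of_infinite _ hli'
end
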